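/- Let p be an odd prime and let A, B be integers such that the discriminant Δ = A² + 4B is a quadratic nonresidue modulo p (hence p ∤ B). Then the period k_{A,B}(p) exists and divides 2(p + 1)·ord_p(B²), where ord_p(B²) is the multiplicative order of B² modulo p. -/

import Mathlib

/-!
Let `α` be a root of `X² - A X - B` in `𝔽_p(α) ≅ 𝔽_{p²}`. Since `1, α` are linearly independent
over `𝔽_p`, the identity `α^(n+1) = E_(n+1) α + B E_n` shows that `E_i ≡ 0, E_(i+1) ≡ 1 (mod p)`
exactly when `α^i = 1`, so the period is the multiplicative order of `α`. As `Δ` is a nonresidue,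
Euler's criterion makes the Frobenius swap `α` with its conjugate `A - α`, whence
`α^(p+1) = α (A - α) = -B` and `α^(2(p+1) ord_p(B²)) = 1`.
-/

open Polynomial

theorem pow_succ_eq_mul_add_of_sq_eq {R : Type*} [CommRing R] {α a b : R}
    (hα : α ^ 2 = a * α + b) {E : ℕ → R} (h0 : E 0 = 0) (h1 : E 1 = 1)
    (hrec : ∀ n, E (n + 2) = a * E (n + 1) + b * E n) (n : ℕ) :
    α ^ (n + 1) = E (n + 1) * α + b * E n := by
  induction n with
  | zero => simp [h0, h1]
  | succ n ih =>
    rw [pow_succ, ih, hrec]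
    linear_combination E (n + 1) * hα

theorem sq_ne_mul_add_of_not_isSquare {R : Type*} [CommRing R] {a b : R}
    (h : ¬IsSquare (a ^ 2 + 4 * b)) (x : R) : x ^ 2 ≠ a * x + b :=
  fun hx => h ⟨2 * x - a, by linear_combination (-4) * hx⟩

theorem IsOfFinOrder.isLeast_orderOf {G : Type*} [Monoid G] {x : G} (hx : IsOfFinOrder x) :
    IsLeast {n | 0 < n ∧ x ^ n = 1} (orderOf x) :=
  ⟨⟨hx.orderOf_pos, pow_orderOf_eq_one x⟩, fun _ ⟨hn, h⟩ => orderOf_le_of_pow_eq_one hn h⟩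

theorem irreducible_quadratic_of_not_isSquare {F : Type*} [Field F] {a b : F}
    (h : ¬IsSquare (a ^ 2 + 4 * b)) : Irreducible (X ^ 2 - C a * X - C b) :=
  irreducible_of_degree_le_three_of_not_isRoot (by
    rw [show (X ^ 2 - C a * X - C b : F[X]).natDegree = 2 by compute_degree!]; decide)
    fun x hx => sq_ne_mul_add_of_not_isSquare h x (by simpa [sub_sub, sub_eq_zero] using hx)

section QuadraticExtension

variable {F K : Type*} [Field F] [CommRing K] [IsDomain K] [Algebra F K]

theorem notMem_range_algebraMap_of_sq_eq {a b : F} (hdisc : ¬IsSquare (a ^ 2 + 4 * b)) {α : K}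
    (hα : α ^ 2 = algebraMap F K a * α + algebraMap F K b) : α ∉ Set.range (algebraMap F K) := by
  rintro ⟨x, rfl⟩
  refine sq_ne_mul_add_of_not_isSquare hdisc x ((algebraMap F K).injective ?_)
  simpa using hα

theorem eq_zero_of_algebraMap_mul_add_eq_zero {α : K} (hα : α ∉ Set.range (algebraMap F K))
    {x y : F} (h : algebraMap F K x * α + algebraMap F K y = 0) : x = 0 ∧ y = 0 := by
  have hx : x = 0 := by
    by_contra hx
    have hinv : algebraMap F K x⁻¹ * algebraMap F K x = 1 := by
      rw [← map_mul, inv_mul_cancel₀ hx, map_one]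
    refine hα ⟨-y * x⁻¹, ?_⟩
    rw [map_mul, map_neg]
    linear_combination -algebraMap F K x⁻¹ * h + α * hinv
  subst hx
  simpa using h

theorem pow_eq_one_iff_of_sq_eq {α : K} (hα : α ∉ Set.range (algebraMap F K)) {a b : F}
    (hb : b ≠ 0) (hsq : α ^ 2 = algebraMap F K a * α + algebraMap F K b) {E : ℕ → F}
    (h0 : E 0 = 0) (h1 : E 1 = 1) (hrec : ∀ n, E (n + 2) = a * E (n + 1) + b * E n) (i : ℕ) :
    α ^ i = 1 ↔ E i = 0 ∧ E (i + 1) = 1 := by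
  have hα0 : α ≠ 0 := by rintro rfl; exact hα ⟨0, map_zero _⟩
  have hpow := pow_succ_eq_mul_add_of_sq_eq hsq (E := fun n => algebraMap F K (E n))
    (by simp [h0]) (by simp [h1]) (fun n => by simp [hrec]) i
  calc α ^ i = 1 ↔ α ^ (i + 1) = α := by rw [pow_succ, mul_eq_right₀ hα0]
    _ ↔ algebraMap F K (E (i + 1) - 1) * α + algebraMap F K (b * E i) = 0 := by
      rw [hpow, map_sub, map_one, map_mul, ← sub_eq_zero]
      ring_nf
    _ ↔ E (i + 1) - 1 = 0 ∧ b * E i = 0 :=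
      ⟨eq_zero_of_algebraMap_mul_add_eq_zero hα, fun ⟨h, h'⟩ => by simp [h, h']⟩
    _ ↔ E i = 0 ∧ E (i + 1) = 1 := by rw [sub_eq_zero, mul_eq_zero, or_iff_right hb, and_comm]

end QuadraticExtension

theorem ZMod.ne_two_of_not_isSquare {n : ℕ} {Δ : ZMod n} (hΔ : ¬IsSquare Δ) : n ≠ 2 := by
  rintro rfl
  exact hΔ (FiniteField.isSquare_of_char_two (ZMod.ringChar_zmod_n 2) Δ)

section Frobenius

variable {p : ℕ} [Fact p.Prime] {K : Type*} [CommRing K] [Algebra (ZMod p) K]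

theorem pow_char_eq_neg_of_sq_eq_of_not_isSquare {Δ : ZMod p} (hΔ : ¬IsSquare Δ) {δ : K}
    (hδ : δ ^ 2 = algebraMap (ZMod p) K Δ) : δ ^ p = -δ := by
  have hΔ0 : Δ ≠ 0 := by rintro rfl; exact hΔ .zero
  have hEuler : Δ ^ (p / 2) = -1 :=
    (ZMod.pow_div_two_eq_neg_one_or_one p hΔ0).resolve_left
      fun h => hΔ ((ZMod.euler_criterion p hΔ0).mpr h)
  calc δ ^ p = (δ ^ 2) ^ (p / 2) * δ := by
        rw [← pow_mul, ← pow_succ, Nat.two_mul_div_two_add_one_of_odd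
          ((Fact.out : p.Prime).odd_of_ne_two (ZMod.ne_two_of_not_isSquare hΔ))]
    _ = -δ := by rw [hδ, ← map_pow, hEuler, map_neg, map_one, neg_one_mul]

theorem pow_char_succ_eq_neg_of_sq_eq [IsDomain K] {a b : ZMod p}
    (hdisc : ¬IsSquare (a ^ 2 + 4 * b)) {α : K}
    (hα : α ^ 2 = algebraMap (ZMod p) K a * α + algebraMap (ZMod p) K b) :
    α ^ (p + 1) = -algebraMap (ZMod p) K b := by
  have := charP_of_injective_algebraMap (algebraMap (ZMod p) K).injective p
  have hfix (x : ZMod p) : algebraMap (ZMod p) K x ^ p = algebraMap (ZMod p) K x := by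
    rw [← map_pow, ZMod.pow_card]
  have h2 : (2 : K) ≠ 0 := by
    rw [← map_ofNat (algebraMap (ZMod p) K), _root_.map_ne_zero]
    exact Ring.two_ne_zero (by rw [ZMod.ringChar_zmod_n]; exact ZMod.ne_two_of_not_isSquare hdisc)
  -- `2α - a` is a square root of the discriminant, so the Frobenius negates it
  have hδ : (2 * α - algebraMap (ZMod p) K a) ^ 2 = algebraMap (ZMod p) K (a ^ 2 + 4 * b) := by
    simp only [map_add, map_mul, map_pow, map_ofNat]
    linear_combination 4 * hα
  have hconj : α ^ p = algebraMap (ZMod p) K a - α := by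
    have h := pow_char_eq_neg_of_sq_eq_of_not_isSquare hdisc hδ
    rw [sub_pow_char, mul_pow, hfix, ← map_ofNat (algebraMap (ZMod p) K) 2, hfix, map_ofNat] at h
    exact mul_left_cancel₀ h2 (by linear_combination h)
  calc α ^ (p + 1) = (algebraMap (ZMod p) K a - α) * α := by rw [pow_succ, hconj]
    _ = -algebraMap (ZMod p) K b := by linear_combination -hα

end Frobenius

theorem general_period_dvd_bound_general (p : ℕ) (hp : p.Prime)
    (A B : ℤ) (hΔ : ¬ ∃ y : ZMod p, y ^ 2 = ((A ^ 2 + 4 * B : ℤ) : ZMod p))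
    (E : ℕ → ℤ) (hE0 : E 0 = 0) (hE1 : E 1 = 1)
    (hErec : ∀ n : ℕ, E (n + 2) = A * E (n + 1) + B * E n) :
    ∃ k : ℕ, IsLeast {i : ℕ | 0 < i ∧ E i ≡ 0 [ZMOD (p : ℤ)] ∧
      E (i + 1) ≡ 1 [ZMOD (p : ℤ)]} k ∧
      k ∣ 2 * (p + 1) * orderOf (((B : ZMod p)) ^ 2) := by
  have := Fact.mk hp
  have hdisc : ¬IsSquare ((A : ZMod p) ^ 2 + 4 * B) := by
    rintro ⟨y, hy⟩
    exact hΔ ⟨y, by push_cast; rw [hy, sq]⟩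
  have hB : (B : ZMod p) ≠ 0 := by
    rintro hB
    exact hdisc ⟨A, by rw [hB]; ring⟩
  have := Fact.mk (irreducible_quadratic_of_not_isSquare hdisc)
  set α := AdjoinRoot.root (X ^ 2 - C (A : ZMod p) * X - C (B : ZMod p))
  have hsq : α ^ 2 = algebraMap (ZMod p) _ A * α + algebraMap (ZMod p) _ B := by
    have := AdjoinRoot.eval₂_root (X ^ 2 - C (A : ZMod p) * X - C (B : ZMod p))
    simp only [eval₂_sub, eval₂_mul, eval₂_pow, eval₂_X, eval₂_C, ← AdjoinRoot.algebraMap_eq] at this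
    linear_combination this
  have hperiod (i : ℕ) : (E i ≡ 0 [ZMOD p] ∧ E (i + 1) ≡ 1 [ZMOD p]) ↔ α ^ i = 1 := by
    rw [pow_eq_one_iff_of_sq_eq (notMem_range_algebraMap_of_sq_eq hdisc hsq) hB hsq
      (E := fun n => (E n : ZMod p)) (by simp [hE0]) (by simp [hE1]) (fun n => by simp [hErec])]
    simp only [← ZMod.intCast_eq_intCast_iff, Int.cast_zero, Int.cast_one]
  have hpow : α ^ (2 * (p + 1) * orderOf ((B : ZMod p) ^ 2)) = 1 := by
    rw [mul_comm 2, pow_mul, pow_mul, pow_char_succ_eq_neg_of_sq_eq hdisc hsq, neg_sq, ← map_pow,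
      ← map_pow, pow_orderOf_eq_one, map_one]
  have hB2 : 0 < orderOf ((B : ZMod p) ^ 2) :=
    Nat.pos_of_ne_zero (orderOf_eq_zero_iff_eq_zero.not.mpr (pow_ne_zero 2 hB))
  have hfin : IsOfFinOrder α := isOfFinOrder_iff_pow_eq_one.mpr ⟨_, by positivity, hpow⟩
  refine ⟨orderOf α, ?_, orderOf_dvd_of_pow_eq_one hpow⟩
  simp_rw [hperiod]
  exact hfin.isLeast_orderOf

theorem general_period_dvd_bound (p : ℕ) (hp : p.Prime) (hodd : Odd p)
    (A B : ℤ) (hΔ : ¬ ∃ y : ZMod p, y ^ 2 = ((A ^ 2 + 4 * B : ℤ) : ZMod p))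
    (E : ℕ → ℤ) (hE0 : E 0 = 0) (hE1 : E 1 = 1)
    (hErec : ∀ n : ℕ, E (n + 2) = A * E (n + 1) + B * E n) :
    ∃ k : ℕ, IsLeast {i : ℕ | 0 < i ∧ E i ≡ 0 [ZMOD (p : ℤ)] ∧
      E (i + 1) ≡ 1 [ZMOD (p : ℤ)]} k ∧
      k ∣ 2 * (p + 1) * orderOf (((B : ZMod p)) ^ 2) :=
  general_period_dvd_bound_general p hp A B hΔ E hE0 hE1 hErec
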